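/- Let n ≥ 1 and let e, x be integers with 0 ≤ e ≤ n and 0 ≤ x ≤ n. If x = 2m is even, then Σ_{i=0}^{n} K_e(2;i)² · K_i(2;x) = 2ⁿ · C(2m, m) · C(n−2m, e−m) (where C(a,b) = 0 if b < 0 or b > a); if x is odd, then Σ_{i=0}^{n} K_e(2;i)² · K_i(2;x) = 0. In particular, the sum equals 0 whenever x > 2e. -/

import Mathlib

/-!
Realise the Hamming space as the subsets of a set of size `n`. For `#w = x`, the binary
Krawtchouk value `K_t(x)` is the character sum `∑_{#s = t} (-1)^{#(s ∩ w)}`. Expanding the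
square `K_e(#s)²` and summing over `s` with the orthogonality relation
`∑_s (-1)^{#(t ∩ s)} = 2ⁿ [t = ∅]` leaves `2ⁿ` times the number of `e`-sets `u` with
`#(u ∆ w) = e`, i.e. with `2 #(u ∩ w) = #w`. There are none for odd `#w`, and for `#w = 2m`
such a `u` is half of `w` together with `e - m` points outside `w`.
-/

/-- The `q`-ary Krawtchouk polynomial `K_t(q;x)` (with parameter `n`), evaluated at a
natural number `x`. -/
def kraw (n q t x : ℕ) : ℤ :=
  ∑ l ∈ Finset.range (t + 1),
    (-1 : ℤ) ^ l * (x.choose l) * ((n - x).choose (t - l)) * ((q : ℤ) - 1) ^ (t - l)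

open Finset
open scoped symmDiff

namespace Finset

variable {α : Type*} [DecidableEq α]

theorem card_symmDiff_add_two_mul_card_inter (s t : Finset α) :
    #(s ∆ t) + 2 * #(s ∩ t) = #s + #t := by
  rw [symmDiff_eq_sup_sdiff_inf, sup_eq_union, inf_eq_inter,
    card_sdiff_of_subset (inter_subset_left.trans subset_union_left),
    ← card_union_add_card_inter]
  have := card_le_card (inter_subset_left.trans subset_union_left : s ∩ t ⊆ s ∪ t)
  omega

theorem card_symmDiff_eq_iff {u w : Finset α} {e : ℕ} (hu : #u = e) :
    #(u ∆ w) = e ↔ 2 * #(u ∩ w) = #w := by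
  have := card_symmDiff_add_two_mul_card_inter u w
  omega

theorem neg_one_pow_card_mul_neg_one_pow_card {R : Type*} [Monoid R] [HasDistribNeg R]
    (s t : Finset α) : (-1 : R) ^ #s * (-1) ^ #t = (-1) ^ #(s ∆ t) := by
  rw [← pow_add, ← card_symmDiff_add_two_mul_card_inter, pow_add, pow_mul, neg_one_sq, one_pow,
    mul_one]

variable [Fintype α]

theorem sum_neg_one_pow_card_inter {R : Type*} [CommRing R] (t : Finset α) :
    ∑ s : Finset α, (-1 : R) ^ #(t ∩ s) = if t = ∅ then 2 ^ Fintype.card α else 0 := by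
  have hprod : ∀ s : Finset α, (-1 : R) ^ #(t ∩ s) = ∏ j ∈ s, if j ∈ t then -1 else 1 := by
    intro s
    rw [prod_ite, prod_const, prod_const, one_pow, mul_one, filter_mem_eq_inter, inter_comm]
  simp_rw [hprod, ← powerset_univ, ← prod_add_one]
  split_ifs with ht
  · simp [ht, card_univ, one_add_one_eq_two]
  · obtain ⟨a, ha⟩ := nonempty_iff_ne_empty.2 ht
    exact prod_eq_zero (mem_univ a) (by simp [ha])

theorem card_filter_card_inter_eq (w : Finset α) {t l : ℕ} (hl : l ≤ t) :
    #{s ∈ powersetCard t univ | #(s ∩ w) = l} = (#w).choose l * (#wᶜ).choose (t - l) := by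
  rw [← card_powersetCard, ← card_powersetCard, ← card_product]
  have hinter : ∀ b c : Finset α, b ⊆ w → c ⊆ wᶜ → (b ∪ c) ∩ w = b := fun b c hb hc => by
    rw [union_inter_distrib_right, inter_eq_left.2 hb,
      disjoint_iff_inter_eq_empty.1 (subset_compl_iff_disjoint_right.1 hc), union_empty]
  have hsdiff : ∀ b c : Finset α, b ⊆ w → c ⊆ wᶜ → (b ∪ c) \ w = c := fun b c hb hc => by
    rw [union_sdiff_distrib, sdiff_eq_empty_iff_subset.2 hb, empty_union,
      sdiff_eq_self_of_disjoint (subset_compl_iff_disjoint_right.1 hc)]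
  refine card_nbij' (fun s => (s ∩ w, s \ w)) (fun p => p.1 ∪ p.2) ?_ ?_ ?_ ?_
  · intro s hs
    simp only [mem_coe, mem_filter, mem_powersetCard] at hs
    have := card_sdiff_add_card_inter s w
    simp only [coe_product, Set.mem_prod, mem_coe, mem_powersetCard]
    exact ⟨⟨inter_subset_right, hs.2⟩, fun a ha => by simp [(mem_sdiff.1 ha).2], by omega⟩
  · rintro ⟨b, c⟩ hp
    simp only [coe_product, Set.mem_prod, mem_coe, mem_powersetCard] at hp
    obtain ⟨⟨hb, rfl⟩, hc, hcc⟩ := hp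
    simp only [mem_coe, mem_filter, mem_powersetCard, subset_univ, true_and]
    refine ⟨?_, by rw [hinter b c hb hc]⟩
    rw [card_union_of_disjoint (disjoint_of_subset_left hb (subset_compl_iff_disjoint_left.1 hc)),
      hcc]
    omega
  · intro s _
    exact (union_comm _ _).trans (sdiff_union_inter s w)
  · rintro ⟨b, c⟩ hp
    simp only [coe_product, Set.mem_prod, mem_coe, mem_powersetCard] at hp
    exact Prod.ext (hinter b c hp.1.1 hp.2.1) (hsdiff b c hp.1.1 hp.2.1)

theorem card_filter_card_symmDiff_eq_of_card_eq_two_mul {w : Finset α} {m : ℕ}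
    (hw : #w = 2 * m) (e : ℕ) :
    #{u ∈ powersetCard e univ | #(u ∆ w) = e}
      = if m ≤ e then (2 * m).choose m * (Fintype.card α - 2 * m).choose (e - m) else 0 := by
  have hfilter : {u ∈ powersetCard e (univ : Finset α) | #(u ∆ w) = e}
      = {u ∈ powersetCard e (univ : Finset α) | #(u ∩ w) = m} := filter_congr fun u hu => by
    rw [card_symmDiff_eq_iff (mem_powersetCard.1 hu).2]
    omega
  rw [hfilter]
  split_ifs with hm
  · rw [card_filter_card_inter_eq w hm, card_compl, hw]
  · refine card_eq_zero.2 (filter_eq_empty_iff.2 fun u hu hum => hm ?_)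
    exact hum ▸ (mem_powersetCard.1 hu).2 ▸ card_le_card inter_subset_left

theorem filter_card_symmDiff_eq_eq_empty_of_odd {w : Finset α} (hw : Odd #w) (e : ℕ) :
    {u ∈ powersetCard e (univ : Finset α) | #(u ∆ w) = e} = ∅ := by
  refine filter_eq_empty_iff.2 fun u hu h => ?_
  rw [card_symmDiff_eq_iff (mem_powersetCard.1 hu).2] at h
  obtain ⟨r, hr⟩ := hw
  omega

end Finset

section Krawtchouk

variable {α : Type*} [Fintype α] [DecidableEq α]

theorem kraw_two_card_eq_sum_powersetCard (t : ℕ) (w : Finset α) :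
    kraw (Fintype.card α) 2 t #w = ∑ s ∈ powersetCard t univ, (-1 : ℤ) ^ #(s ∩ w) := by
  have hmaps : ∀ s ∈ powersetCard t (univ : Finset α), #(s ∩ w) ∈ range (t + 1) :=
    fun s hs => mem_range_succ_iff.2 ((card_le_card inter_subset_left).trans
      (mem_powersetCard.1 hs).2.le)
  rw [← sum_fiberwise_of_maps_to hmaps, kraw]
  refine sum_congr rfl fun l hl => ?_
  rw [sum_congr rfl fun s hs => by rw [(mem_filter.1 hs).2], sum_const,
    card_filter_card_inter_eq w (mem_range_succ_iff.1 hl), card_compl, nsmul_eq_mul]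
  push_cast
  ring

theorem sum_mul_kraw_two_card (f : ℕ → ℤ) (w : Finset α) :
    ∑ i ∈ range (Fintype.card α + 1), f i * kraw (Fintype.card α) 2 i #w
      = ∑ s : Finset α, f #s * (-1) ^ #(s ∩ w) := by
  have hmaps : ∀ s ∈ (univ : Finset (Finset α)), #s ∈ range (Fintype.card α + 1) :=
    fun s _ => mem_range_succ_iff.2 (card_le_univ s)
  rw [← sum_fiberwise_of_maps_to hmaps]
  refine sum_congr rfl fun i _ => ?_
  rw [← powerset_univ, ← powersetCard_eq_filter, kraw_two_card_eq_sum_powersetCard, mul_sum]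
  exact sum_congr rfl fun s hs => by rw [(mem_powersetCard.1 hs).2]

theorem sum_kraw_two_sq_mul_kraw_two (e : ℕ) (w : Finset α) :
    ∑ i ∈ range (Fintype.card α + 1),
        kraw (Fintype.card α) 2 e i ^ 2 * kraw (Fintype.card α) 2 i #w
      = 2 ^ Fintype.card α * #{u ∈ powersetCard e univ | #(u ∆ w) = e} := by
  set P := powersetCard e (univ : Finset α)
  calc _ = ∑ s : Finset α, (∑ u ∈ P, (-1 : ℤ) ^ #(u ∩ s)) ^ 2 * (-1) ^ #(s ∩ w) := by
        simp_rw [sum_mul_kraw_two_card, kraw_two_card_eq_sum_powersetCard]; rfl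
    _ = ∑ s : Finset α, ∑ u ∈ P, ∑ v ∈ P, (-1 : ℤ) ^ #((u ∆ v ∆ w) ∩ s) := by
        refine sum_congr rfl fun s _ => ?_
        simp_rw [sq, sum_mul_sum, sum_mul, inter_comm s w, neg_one_pow_card_mul_neg_one_pow_card,
          ← inf_eq_inter, ← inf_symmDiff_distrib_right]
    _ = ∑ u ∈ P, ∑ v ∈ P, if u ∆ w = v then (2 : ℤ) ^ Fintype.card α else 0 := by
        rw [sum_comm]
        refine sum_congr rfl fun u _ => ?_
        rw [sum_comm]
        refine sum_congr rfl fun v _ => ?_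
        simp only [sum_neg_one_pow_card_inter, symmDiff_right_comm u v, ← bot_eq_empty,
          symmDiff_eq_bot]
    _ = 2 ^ Fintype.card α * #{u ∈ P | #(u ∆ w) = e} := by
        simp only [sum_ite_eq, P, mem_powersetCard, subset_univ, true_and]
        rw [sum_ite, sum_const, sum_const_zero, add_zero, nsmul_eq_mul, mul_comm]

end Krawtchouk

theorem F_e_evaluation_binary_general (n e x : ℕ) (hx : x ≤ n) :
    (∀ m : ℕ, x = 2 * m →
      ∑ i ∈ Finset.range (n + 1), (kraw n 2 e i) ^ 2 * kraw n 2 i x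
        = if m ≤ e then
            (2 : ℤ) ^ n * ((2 * m).choose m) * ((n - 2 * m).choose (e - m))
          else 0) ∧
    (Odd x → ∑ i ∈ Finset.range (n + 1), (kraw n 2 e i) ^ 2 * kraw n 2 i x = 0) ∧
    (2 * e < x → ∑ i ∈ Finset.range (n + 1), (kraw n 2 e i) ^ 2 * kraw n 2 i x = 0) := by
  obtain ⟨w, -, rfl⟩ : ∃ w ⊆ (univ : Finset (Fin n)), #w = x :=
    exists_subset_card_eq (by simpa using hx)
  have hsum := sum_kraw_two_sq_mul_kraw_two e w
  rw [Fintype.card_fin] at hsum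
  have heven : ∀ m : ℕ, #w = 2 * m →
      ∑ i ∈ range (n + 1), kraw n 2 e i ^ 2 * kraw n 2 i #w
        = if m ≤ e then (2 : ℤ) ^ n * (2 * m).choose m * (n - 2 * m).choose (e - m) else 0 := by
    intro m hm
    rw [hsum, card_filter_card_symmDiff_eq_of_card_eq_two_mul hm, Fintype.card_fin]
    split_ifs <;> push_cast <;> ring
  have hodd : Odd #w → ∑ i ∈ range (n + 1), kraw n 2 e i ^ 2 * kraw n 2 i #w = 0 := by
    intro hw
    rw [hsum, filter_card_symmDiff_eq_eq_empty_of_odd hw, card_empty, Nat.cast_zero, mul_zero]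
  refine ⟨heven, hodd, fun hlt => ?_⟩
  rcases Nat.even_or_odd #w with ⟨m, hm⟩ | hw
  · rw [heven m (by omega), if_neg (by omega)]
  · exact hodd hw

/-- Evaluation of the binary polynomial `F_e` (with Krawtchouk coefficients
`f_i = K_e(2;i)²`): for even `x = 2m`,
`∑_{i=0}^n K_e(2;i)² K_i(2;x) = 2ⁿ C(2m,m) C(n-2m,e-m)` (zero if `m > e`),
and the sum vanishes for odd `x`.  In particular it is `0` whenever `x > 2e`. -/
theorem F_e_evaluation_binary (n e x : ℕ) (hn : 1 ≤ n) (he : e ≤ n) (hx : x ≤ n) :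
    (∀ m : ℕ, x = 2 * m →
      ∑ i ∈ Finset.range (n + 1), (kraw n 2 e i) ^ 2 * kraw n 2 i x
        = if m ≤ e then
            (2 : ℤ) ^ n * ((2 * m).choose m) * ((n - 2 * m).choose (e - m))
          else 0) ∧
    (Odd x → ∑ i ∈ Finset.range (n + 1), (kraw n 2 e i) ^ 2 * kraw n 2 i x = 0) ∧
    (2 * e < x → ∑ i ∈ Finset.range (n + 1), (kraw n 2 e i) ^ 2 * kraw n 2 i x = 0) :=
  F_e_evaluation_binary_general n e x hx
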